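/- For every α ≥ 1 there exists a constant c = c(α) such that for all a, b ∈ ℝ^N (N ∈ ℕ), |b − a|^α ≤ c |⟦b⟧^α − ⟦a⟧^α|, where ⟦v⟧^α := |v|^{α−1} v. -/
import Mathlib

open scoped RealInnerProductSpace

/-- The vector power `⟦v⟧^α = |v|^{α-1} v`, interpreted as `0` when `v = 0`. -/
noncomputable def vpow {N : ℕ} (α : ℝ) (v : EuclideanSpace ℝ (Fin N)) :
    EuclideanSpace ℝ (Fin N) := ‖v‖ ^ (α - 1) • v

theorem stmt_2 (α : ℝ) (hα : 1 ≤ α) :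
    ∃ c : ℝ, 0 < c ∧ ∀ (N : ℕ) (a b : EuclideanSpace ℝ (Fin N)),
      ‖b - a‖ ^ α ≤ c * ‖vpow α b - vpow α a‖ := by
  refine ⟨2 ^ α, Real.rpow_pos_of_pos two_pos α, fun N a b => ?_⟩
  by_cases hab : b = a
  · subst hab
    simp [vpow, Real.zero_rpow (by linarith : α ≠ 0)]
  · set t : ℝ := ‖b - a‖ with ht_def
    have ht : 0 < t := by
      rw [ht_def]
      exact norm_pos_iff.mpr (sub_ne_zero.mpr hab)
    set q : ℝ := α - 1 with hq_def
    have hq : 0 ≤ q := by simp [hq_def]; linarith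
    set A : ℝ := ‖a‖ with hA_def
    set B : ℝ := ‖b‖ with hB_def
    have hA : 0 ≤ A := norm_nonneg a
    have hB : 0 ≤ B := norm_nonneg b
    set ip : ℝ := ⟪a, b⟫ with hip_def
    set D := vpow α b - vpow α a with hD_def
    -- expansion of the inner product
    have hip2 : (⟪b, a⟫ : ℝ) = ip := by rw [hip_def, real_inner_comm]
    have e1 : ⟪D, b - a⟫ = B ^ q * (B ^ 2 - ip) - A ^ q * (ip - A ^ 2) := by
      rw [hD_def]
      simp only [vpow, inner_sub_left, inner_sub_right, real_inner_smul_left,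
        real_inner_self_eq_norm_sq]
      rw [hip2, ← hA_def, ← hB_def]
      ring
    have e2 : t ^ 2 = B ^ 2 - 2 * ip + A ^ 2 := by
      rw [ht_def, @norm_sub_sq_real, hip2, ← hA_def, ← hB_def]
    have sign : 0 ≤ (B ^ q - A ^ q) * (B ^ 2 - A ^ 2) := by
      rcases le_total A B with h | h
      · exact mul_nonneg (sub_nonneg.mpr (Real.rpow_le_rpow hA h hq))
          (sub_nonneg.mpr (pow_le_pow_left₀ hA h 2))
      · have h1 : B ^ q ≤ A ^ q := Real.rpow_le_rpow hB h hq
        have h2 : B ^ 2 ≤ A ^ 2 := pow_le_pow_left₀ hB h 2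
        nlinarith
    have lower : (A ^ q + B ^ q) / 2 * t ^ 2 ≤ ⟪D, b - a⟫ := by
      rw [e1, e2]; nlinarith [sign]
    -- bound t^q
    have tq : t ^ q ≤ 2 ^ q * (A ^ q + B ^ q) := by
      have h1 : t ≤ 2 * max A B := by
        calc t ≤ B + A := by rw [ht_def, hA_def, hB_def]; exact norm_sub_le b a
        _ ≤ 2 * max A B := by
            have := le_max_left A B; have := le_max_right A B; linarith
      have h2 : t ^ q ≤ (2 * max A B) ^ q :=
        Real.rpow_le_rpow ht.le h1 hq
      have h3 : (2 * max A B) ^ q = 2 ^ q * (max A B) ^ q :=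
        Real.mul_rpow (by norm_num) (le_max_of_le_left hA)
      have h4 : (max A B) ^ q ≤ A ^ q + B ^ q := by
        rcases max_cases A B with ⟨hm, _⟩ | ⟨hm, _⟩
        · rw [hm]; nlinarith [Real.rpow_nonneg hB q]
        · rw [hm]; nlinarith [Real.rpow_nonneg hA q]
      calc t ^ q ≤ 2 ^ q * (max A B) ^ q := by rw [← h3]; exact h2
        _ ≤ 2 ^ q * (A ^ q + B ^ q) :=
            mul_le_mul_of_nonneg_left h4 (Real.rpow_nonneg (by norm_num) q)
    have h2α : (2 : ℝ) ^ α = 2 ^ q * 2 := by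
      rw [show α = q + 1 by rw [hq_def]; ring, Real.rpow_add two_pos, Real.rpow_one]
    have et : t ^ (α + 1) = t ^ q * t ^ 2 := by
      rw [show α + 1 = q + 2 by rw [hq_def]; ring, Real.rpow_add ht, Real.rpow_two]
    have chain : t ^ (α + 1) ≤ 2 ^ α * (‖D‖ * t) := by
      calc t ^ (α + 1) = t ^ q * t ^ 2 := et
        _ ≤ 2 ^ q * (A ^ q + B ^ q) * t ^ 2 :=
            mul_le_mul_of_nonneg_right tq (sq_nonneg t)
        _ = 2 ^ α * ((A ^ q + B ^ q) / 2 * t ^ 2) := by rw [h2α]; ring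
        _ ≤ 2 ^ α * ⟪D, b - a⟫ :=
            mul_le_mul_of_nonneg_left lower (Real.rpow_nonneg (by norm_num) α)
        _ ≤ 2 ^ α * (‖D‖ * t) := by
            refine mul_le_mul_of_nonneg_left ?_ (Real.rpow_nonneg (by norm_num) α)
            calc ⟪D, b - a⟫ ≤ ‖D‖ * ‖b - a‖ := real_inner_le_norm D (b - a)
              _ = ‖D‖ * t := by rw [ht_def]
    have et2 : t ^ (α + 1) = t ^ α * t := by
      rw [Real.rpow_add ht, Real.rpow_one]
    have : t ^ α * t ≤ 2 ^ α * ‖D‖ * t := by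
      rw [← et2]; calc t ^ (α + 1) ≤ 2 ^ α * (‖D‖ * t) := chain
        _ = 2 ^ α * ‖D‖ * t := by ring
    exact le_of_mul_le_mul_right this ht
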